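/- arXiv:1403.6972 — 3 statements merged into one kernel-verified Lean document; each statement's English description precedes it below -/
import Mathlib

section
/- Let R = ⊕_{n≥0} R_n be a Noetherian standard N-graded ring (i.e., R is generated as an R_0-algebra by R_1), and let M = ⊕_{n≥0} M_n be a finitely generated N-graded R-module. Then there exists n_0 ≥ 0 such that ann_{R_0}(M_n) = ann_{R_0}(M_{n_0}) for all n ≥ n_0. -/
/-!
If `M` is generated by homogeneous elements of degree at most `d`, then `M_{n+1} = R_1 M_n` for
`n ≥ d`, so the annihilators `ann_{R₀}(M_n)` increase from degree `d` on. `R₀` need not be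
Noetherian, but each `ann_{R₀}(M_n)` is the contraction of its extension to `R` (an element of `R₀`
whose image lies in `ann_{R₀}(M_n) R` still kills `M_n`), so the chain stabilizes because the
extended chain does in the Noetherian ring `R`.
-/

open DirectSum Pointwise Submodule

namespace DirectSum

variable {ι R M σ τ : Type*} [DecidableEq ι] [AddRightCancelMonoid ι] [Semiring R]
  [AddCommMonoid M] [Module R M] [SetLike σ R] [AddSubmonoidClass σ R]
  [SetLike τ M] [AddSubmonoidClass τ M] (𝒜 : ι → σ) (ℳ : ι → τ)
  [Decomposition 𝒜] [Decomposition ℳ] [SetLike.GradedSMul 𝒜 ℳ]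

theorem coe_decompose_smul_add_of_right_mem {r : R} {m : M} {i j : ι} (hm : m ∈ ℳ j) :
    (decompose ℳ (r • m) (i + j) : M) = (decompose 𝒜 r i : R) • m := by
  classical
  conv_lhs => rw [← sum_support_decompose 𝒜 r, Finset.sum_smul, decompose_sum,
    DFinsupp.finsetSum_apply, AddSubmonoidClass.coe_finsetSum]
  have hmem (i' : ι) : (decompose 𝒜 r i' : R) • m ∈ ℳ (i' + j) :=
    SetLike.GradedSMul.smul_mem (decompose 𝒜 r i').2 hm
  rw [Finset.sum_eq_single i
    (fun i' _ hi' => decompose_of_mem_ne ℳ (hmem i') (by simpa using hi'))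
    (fun hi => by rw [DFinsupp.notMem_support_iff.mp hi]; simp), decompose_of_mem_same ℳ (hmem i)]

end DirectSum

theorem Ideal.exists_eq_of_monotone_of_comap_map_eq {A B : Type*} [CommRing A] [CommRing B]
    [IsNoetherianRing B] (f : A →+* B) {I : ℕ → Ideal A} (hI : Monotone I)
    (hcontr : ∀ n, ((I n).map f).comap f = I n) : ∃ n₀, ∀ n ≥ n₀, I n = I n₀ := by
  obtain ⟨n₀, hn₀⟩ := monotone_stabilizes_iff_noetherian.mpr inferInstance
    ⟨fun n => (I n).map f, fun _ _ h => Ideal.map_mono (hI h)⟩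
  exact ⟨n₀, fun n hn => by rw [← hcontr n, ← hcontr n₀]; exact congrArg _ (hn₀ n hn).symm⟩

section

variable {R₀ R M : Type*} [CommRing R₀] [CommRing R] [Algebra R₀ R]
  [AddCommGroup M] [Module R M] [Module R₀ M] [IsScalarTower R₀ R M]

theorem Submodule.comap_map_annihilator (N : Submodule R₀ M) :
    (N.annihilator.map (algebraMap R₀ R)).comap (algebraMap R₀ R) = N.annihilator := by
  refine le_antisymm (fun a ha => mem_annihilator.2 fun w hw => ?_) Ideal.le_comap_map
  have hle : N.annihilator.map (algebraMap R₀ R) ≤ (span R (N : Set M)).annihilator :=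
    Ideal.map_le_iff_le_comap.2 fun b hb => (mem_annihilator_span _ _).2 fun ⟨w, hw⟩ => by
      rw [algebraMap_smul]; exact mem_annihilator.1 hb w hw
  rw [← algebraMap_smul R]
  exact (mem_annihilator_span _ _).1 (hle ha) ⟨w, hw⟩

theorem Submodule.annihilator_le_annihilator_span_smul (S : Set R) (N : Submodule R₀ M) :
    N.annihilator ≤ (span R₀ (S • (N : Set M))).annihilator := by
  intro a ha
  rw [mem_annihilator_span]
  rintro ⟨_, p, -, y, hy, rfl⟩
  simp [smul_comm a p y, mem_annihilator.1 ha y hy]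

end

theorem exists_span_iUnion_le_eq_top {ι R M σ : Type*} [DecidableEq ι] [SemilatticeSup ι]
    [OrderBot ι] [Semiring R] [AddCommMonoid M] [Module R M] [SetLike σ M]
    [AddSubmonoidClass σ M] (ℳ : ι → σ) [Decomposition ℳ] [Module.Finite R M] :
    ∃ d, span R (⋃ k ≤ d, (ℳ k : Set M)) = ⊤ := by
  classical
  obtain ⟨s, hs⟩ := Module.Finite.fg_top (R := R) (M := M)
  refine ⟨s.sup fun m => (decompose ℳ m).support.sup id, eq_top_iff.2 ?_⟩
  rw [← hs, span_le]
  intro m hm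
  rw [← sum_support_decompose ℳ m]
  refine sum_mem fun k hk => subset_span <| Set.mem_biUnion ?_ (decompose ℳ m k).2
  exact (Finset.le_sup (f := id) hk).trans
    (Finset.le_sup (f := fun m => (decompose ℳ m).support.sup id) hm)

section Graded

variable {R₀ R M : Type*} [CommRing R₀] [CommRing R] [Algebra R₀ R]
  [AddCommGroup M] [Module R M] [Module R₀ M]
  (𝒜 : ℕ → Submodule R₀ R) (ℳ : ℕ → Submodule R₀ M)
  [GradedAlgebra 𝒜] [Decomposition ℳ] [SetLike.GradedSMul 𝒜 ℳ]

theorem le_span_smul_of_span_iUnion_le_eq_top (hstd : ∀ n : ℕ, 𝒜 (n + 1) = 𝒜 1 * 𝒜 n)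
    {d n : ℕ} (hgen : span R (⋃ k ≤ d, (ℳ k : Set M)) = ⊤) (hn : d ≤ n) :
    ℳ (n + 1) ≤ span R₀ ((𝒜 1 : Set R) • (ℳ n : Set M)) := by
  intro x hx
  have hx' : x ∈ span R (⋃ k ≤ d, (ℳ k : Set M)) := hgen ▸ mem_top
  rw [← decompose_of_mem_same ℳ hx]
  clear hx
  induction hx' using closure_induction with
  | zero => simp
  | add y z _ _ hy hz =>
    rw [decompose_add, DirectSum.add_apply, coe_add]
    exact add_mem hy hz
  | smul_mem r y hy =>
    obtain ⟨k, hk, hy⟩ := Set.mem_iUnion₂.1 hy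
    rw [show n + 1 = n - k + 1 + k by omega, coe_decompose_smul_add_of_right_mem 𝒜 ℳ hy]
    have hr : (decompose 𝒜 r (n - k + 1) : R) ∈ 𝒜 1 * 𝒜 (n - k) :=
      hstd (n - k) ▸ (decompose 𝒜 r (n - k + 1)).2
    refine Submodule.mul_induction_on hr (fun p hp q hq => ?_) fun p q hp hq => ?_
    · have hqy : q • y ∈ ℳ n := by
        simpa [show n - k + k = n by omega] using SetLike.GradedSMul.smul_mem hq hy
      rw [mul_smul]
      exact subset_span (Set.smul_mem_smul hp hqy)
    · rw [add_smul]
      exact add_mem hp hq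

theorem annihilator_le_annihilator_succ [IsScalarTower R₀ R M]
    (hstd : ∀ n : ℕ, 𝒜 (n + 1) = 𝒜 1 * 𝒜 n)
    {d n : ℕ} (hgen : span R (⋃ k ≤ d, (ℳ k : Set M)) = ⊤) (hn : d ≤ n) :
    (ℳ n).annihilator ≤ (ℳ (n + 1)).annihilator :=
  (annihilator_le_annihilator_span_smul _ _).trans
    (annihilator_mono (le_span_smul_of_span_iUnion_le_eq_top 𝒜 ℳ hstd hgen hn))

end Graded

theorem annihilator_stabilizes_of_graded_general
    {R₀ R M : Type*} [CommRing R₀] [CommRing R] [Algebra R₀ R]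
    [AddCommGroup M] [Module R M] [Module R₀ M] [IsScalarTower R₀ R M]
    (𝒜 : ℕ → Submodule R₀ R) (ℳ : ℕ → Submodule R₀ M)
    [GradedAlgebra 𝒜] [DirectSum.Decomposition ℳ] [SetLike.GradedSMul 𝒜 ℳ]
    (hstd : ∀ n : ℕ, 𝒜 (n + 1) = 𝒜 1 * 𝒜 n)
    [IsNoetherianRing R] [Module.Finite R M] :
    ∃ n₀ : ℕ, ∀ n ≥ n₀,
      Module.annihilator R₀ (ℳ n) = Module.annihilator R₀ (ℳ n₀) := by
  obtain ⟨d, hgen⟩ := exists_span_iUnion_le_eq_top ℳ (R := R)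
  have hmono : Monotone fun i => (ℳ (d + i)).annihilator :=
    monotone_nat_of_le_succ fun i =>
      annihilator_le_annihilator_succ 𝒜 ℳ hstd hgen (d.le_add_right i)
  obtain ⟨N, hN⟩ := Ideal.exists_eq_of_monotone_of_comap_map_eq (algebraMap R₀ R) hmono
    fun i => comap_map_annihilator (ℳ (d + i))
  refine ⟨d + N, fun n hn => ?_⟩
  obtain ⟨i, rfl⟩ := Nat.exists_eq_add_of_le hn
  have h := hN (N + i) (N.le_add_right i)
  rwa [← add_assoc] at h

/-- Let `R = ⊕_{n≥0} R_n` be a Noetherian standard `ℕ`-graded ring (i.e. `R`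
is generated as an `R₀`-algebra in degree one) and `M = ⊕_{n≥0} M_n` a finitely generated
graded `R`-module.  Then the annihilators `ann_{R₀}(M_n)` stabilize: there is `n₀` with
`ann_{R₀}(M_n) = ann_{R₀}(M_{n₀})` for all `n ≥ n₀`. -/
theorem annihilator_stabilizes_of_graded
    {R₀ R M : Type*} [CommRing R₀] [CommRing R] [Algebra R₀ R]
    [AddCommGroup M] [Module R M] [Module R₀ M] [IsScalarTower R₀ R M]
    (𝒜 : ℕ → Submodule R₀ R) (ℳ : ℕ → Submodule R₀ M)
    [GradedAlgebra 𝒜] [DirectSum.Decomposition ℳ] [SetLike.GradedSMul 𝒜 ℳ]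
    (hzero : 𝒜 0 = (1 : Submodule R₀ R))
    (hstd : ∀ n : ℕ, 𝒜 (n + 1) = 𝒜 1 * 𝒜 n)
    [IsNoetherianRing R] [Module.Finite R M] :
    ∃ n₀ : ℕ, ∀ n ≥ n₀,
      Module.annihilator R₀ (ℳ n) = Module.annihilator R₀ (ℳ n₀) :=
  annihilator_stabilizes_of_graded_general 𝒜 ℳ hstd
end

section
/- Let R = ⊕_{n≥0} R_n be a Noetherian standard N-graded ring and M = ⊕_{n≥0} M_n a finitely generated N-graded R-module. Then there exists n_0 ≥ 0 such that dim_{R_0}(M_n) = dim_{R_0}(M_{n_0}) for all n ≥ n_0, where dim_{R_0}(M_n) denotes the Krull dimension of the R_0-module M_n. -/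
open DirectSum

section Aux

variable {R₀ R M : Type*} [CommRing R₀] [CommRing R] [Algebra R₀ R]
    [AddCommGroup M] [Module R M] [Module R₀ M] [IsScalarTower R₀ R M]
    (𝒜 : ℕ → Submodule R₀ R) (ℳ : ℕ → Submodule R₀ M)
    [GradedAlgebra 𝒜] [DirectSum.Decomposition ℳ] [SetLike.GradedSMul 𝒜 ℳ]

/-- In a standard graded algebra, `𝒜 (a + b) = 𝒜 a * 𝒜 b`. -/
lemma aux_grade_add (hzero : 𝒜 0 = (1 : Submodule R₀ R))
    (hstd : ∀ n : ℕ, 𝒜 (n + 1) = 𝒜 1 * 𝒜 n) :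
    ∀ a b : ℕ, 𝒜 (a + b) = 𝒜 a * 𝒜 b := by
  intro a
  induction a with
  | zero => intro b; rw [Nat.zero_add, hzero, one_mul]
  | succ a ih =>
    intro b
    rw [Nat.succ_add, hstd, ih, ← mul_assoc, ← hstd]

/-- Graded component of `r • m` for homogeneous `m`. -/
lemma aux_decompose_smul (r : R) {i : ℕ} {m : M} (hm : m ∈ ℳ i) (j : ℕ) :
    (DirectSum.decompose ℳ (r • m) j : M) =
      if i ≤ j then (DirectSum.decompose 𝒜 r (j - i) : R) • m else 0 := by
  classical
  conv_lhs => rw [← DirectSum.sum_support_decompose 𝒜 r, Finset.sum_smul,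
    DirectSum.decompose_sum]
  rw [DFinsupp.finset_sum_apply]
  rw [AddSubmonoidClass.coe_finset_sum]
  have hterm : ∀ d ∈ (DirectSum.decompose 𝒜 r).support,
      (DirectSum.decompose ℳ ((DirectSum.decompose 𝒜 r d : R) • m) j : M) =
        if d + i = j then (DirectSum.decompose 𝒜 r d : R) • m else 0 := by
    intro d _
    have hmem : (DirectSum.decompose 𝒜 r d : R) • m ∈ ℳ (d + i) := by
      have := SetLike.GradedSMul.smul_mem (SetLike.coe_mem (DirectSum.decompose 𝒜 r d)) hm
      simpa using this
    by_cases h : d + i = j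
    · rw [if_pos h]
      subst h
      exact DirectSum.decompose_of_mem_same ℳ hmem
    · rw [if_neg h]
      exact DirectSum.decompose_of_mem_ne ℳ hmem h
  rw [Finset.sum_congr rfl hterm]
  by_cases hij : i ≤ j
  · rw [if_pos hij]
    have hcond : ∀ d : ℕ, (d + i = j) = (d = j - i) := by
      intro d; apply propext; omega
    simp_rw [hcond]
    rw [Finset.sum_ite_eq' (DirectSum.decompose 𝒜 r).support (j - i)
      (fun d => (DirectSum.decompose 𝒜 r d : R) • m)]
    by_cases hsupp : j - i ∈ (DirectSum.decompose 𝒜 r).support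
    · rw [if_pos hsupp]
    · rw [if_neg hsupp]
      have : DirectSum.decompose 𝒜 r (j - i) = 0 := DFinsupp.notMem_support_iff.mp hsupp
      rw [this]
      simp
  · rw [if_neg hij]
    apply Finset.sum_eq_zero
    intro d hd
    rw [if_neg (by omega)]

/-- Key step: elements of the span of low-degree pieces have their degree `n+1`
component in the `R`-span of `ℳ n`, for `n ≥ N`. -/
lemma aux_step (hzero : 𝒜 0 = (1 : Submodule R₀ R))
    (hstd : ∀ n : ℕ, 𝒜 (n + 1) = 𝒜 1 * 𝒜 n)
    (N n : ℕ) (hn : N ≤ n) (x : M)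
    (hx : x ∈ Submodule.span R (⋃ i ∈ Set.Iic N, (ℳ i : Set M))) :
    (DirectSum.decompose ℳ x (n + 1) : M) ∈ Submodule.span R (ℳ n : Set M) := by
  classical
  induction hx using Submodule.span_induction with
  | mem y hy =>
    rw [Set.mem_iUnion₂] at hy
    obtain ⟨i, hiN, hyi⟩ := hy
    have hiN' : i ≤ N := Set.mem_Iic.mp hiN
    have : i ≠ n + 1 := by omega
    rw [DirectSum.decompose_of_mem_ne ℳ hyi this]
    exact Submodule.zero_mem _
  | zero =>
    rw [DirectSum.decompose_zero]; simp
  | add y z hy hz ihy ihz =>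
    rw [DirectSum.decompose_add, DirectSum.add_apply, Submodule.coe_add]
    exact Submodule.add_mem _ ihy ihz
  | smul r y hy ih =>
    -- write y as sum of its homogeneous components
    have hy' : r • y = ∑ i ∈ (DirectSum.decompose ℳ y).support,
        r • (DirectSum.decompose ℳ y i : M) := by
      conv_lhs => rw [← DirectSum.sum_support_decompose ℳ y]
      rw [Finset.smul_sum]
    rw [hy', DirectSum.decompose_sum, DFinsupp.finset_sum_apply,
      AddSubmonoidClass.coe_finset_sum]
    apply Submodule.sum_mem
    intro i _
    rw [aux_decompose_smul 𝒜 ℳ r (SetLike.coe_mem _) (n + 1)]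
    by_cases hile : i ≤ n + 1
    · rw [if_pos hile]
      by_cases hieq : i = n + 1
      · subst hieq
        simp only [Nat.sub_self]
        exact Submodule.smul_mem _ _ ih
      · -- i ≤ n
        have hin : i ≤ n := by omega
        have hsplit : 𝒜 (n + 1 - i) = 𝒜 1 * 𝒜 (n - i) := by
          have : n + 1 - i = 1 + (n - i) := by omega
          rw [this, aux_grade_add 𝒜 hzero hstd 1 (n - i)]
        have hr : (DirectSum.decompose 𝒜 r (n + 1 - i) : R) ∈ 𝒜 1 * 𝒜 (n - i) := by
          rw [← hsplit]; exact SetLike.coe_mem _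
        refine Submodule.mul_induction_on hr ?_ ?_
        · intro a ha b hb
          rw [mul_smul]
          apply Submodule.smul_mem
          apply Submodule.subset_span
          have h3 : b • (DirectSum.decompose ℳ y i : M) ∈ ℳ (n - i + i) := by
            have := SetLike.GradedSMul.smul_mem hb (SetLike.coe_mem (DirectSum.decompose ℳ y i))
            simpa using this
          rwa [Nat.sub_add_cancel hin] at h3
        · intro c₁ c₂ h₁ h₂
          rw [add_smul]
          exact Submodule.add_mem _ h₁ h₂
    · rw [if_neg hile]
      exact Submodule.zero_mem _

end Aux

/-- Let `R = ⊕_{n≥0} R_n` be a Noetherian standard `ℕ`-graded ring and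
`M = ⊕_{n≥0} M_n` a finitely generated graded `R`-module.  Then the Krull dimensions
`dim_{R₀}(M_n) = dim (R₀ / ann_{R₀}(M_n))` stabilize: there is `n₀` with
`dim_{R₀}(M_n) = dim_{R₀}(M_{n₀})` for all `n ≥ n₀`. -/
theorem dim_stabilizes_of_graded
    {R₀ R M : Type*} [CommRing R₀] [CommRing R] [Algebra R₀ R]
    [AddCommGroup M] [Module R M] [Module R₀ M] [IsScalarTower R₀ R M]
    (𝒜 : ℕ → Submodule R₀ R) (ℳ : ℕ → Submodule R₀ M)
    [GradedAlgebra 𝒜] [DirectSum.Decomposition ℳ] [SetLike.GradedSMul 𝒜 ℳ]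
    (hzero : 𝒜 0 = (1 : Submodule R₀ R))
    (hstd : ∀ n : ℕ, 𝒜 (n + 1) = 𝒜 1 * 𝒜 n)
    [IsNoetherianRing R] [Module.Finite R M] :
    ∃ n₀ : ℕ, ∀ n ≥ n₀,
      ringKrullDim (R₀ ⧸ Module.annihilator R₀ (ℳ n)) =
        ringKrullDim (R₀ ⧸ Module.annihilator R₀ (ℳ n₀)) := by
  classical
  -- a finite generating set, and a degree bound N
  obtain ⟨S, hS⟩ : (⊤ : Submodule R M).FG := Module.Finite.fg_top
  set N : ℕ := S.sup (fun s => (DirectSum.decompose ℳ s).support.sup id) with hNdef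
  -- the span of the pieces of degree ≤ N is everything
  have htop : Submodule.span R (⋃ i ∈ Set.Iic N, (ℳ i : Set M)) = ⊤ := by
    rw [eq_top_iff, ← hS, Submodule.span_le]
    intro s hs
    have : s = ∑ i ∈ (DirectSum.decompose ℳ s).support, (DirectSum.decompose ℳ s i : M) :=
      (DirectSum.sum_support_decompose ℳ s).symm
    rw [this]
    apply Submodule.sum_mem
    intro i hi
    apply Submodule.subset_span
    refine Set.mem_biUnion (show i ∈ Set.Iic N from ?_) (SetLike.coe_mem _)
    have h1 : i ≤ (DirectSum.decompose ℳ s).support.sup id := Finset.le_sup (f := id) hi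
    have h2 : (DirectSum.decompose ℳ s).support.sup id ≤ N := Finset.le_sup (f := fun s => (DirectSum.decompose ℳ s).support.sup id) hs
    exact le_trans h1 h2
  -- key inclusion
  have hkey : ∀ n, N ≤ n → ∀ x ∈ ℳ (n + 1), x ∈ Submodule.span R (ℳ n : Set M) := by
    intro n hn x hx
    have hx' : x ∈ Submodule.span R (⋃ i ∈ Set.Iic N, (ℳ i : Set M)) := by
      rw [htop]; trivial
    have := aux_step 𝒜 ℳ hzero hstd N n hn x hx'
    rwa [DirectSum.decompose_of_mem_same ℳ hx] at this
  -- the "annihilator" ideals in R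
  let b : ℕ → Ideal R := fun n =>
    { carrier := {r : R | ∀ m ∈ ℳ n, r • m = 0}
      add_mem' := fun {r₁ r₂} h₁ h₂ m hm => by
        rw [add_smul, h₁ m hm, h₂ m hm, add_zero]
      zero_mem' := fun m hm => by rw [zero_smul]
      smul_mem' := fun c r hr m hm => by
        rw [smul_eq_mul, mul_smul, hr m hm, smul_zero] }
  have hbmono : ∀ n, N ≤ n → b n ≤ b (n + 1) := by
    intro n hn r hr
    intro m hm
    -- the kernel of r• is an R-submodule containing ℳ n, hence its span, hence ℳ (n+1)
    let K : Submodule R M :=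
      { carrier := {x : M | r • x = 0}
        add_mem' := fun {x y} hx hy => by
          simp only [Set.mem_setOf_eq] at *
          rw [smul_add, hx, hy, add_zero]
        zero_mem' := by simp
        smul_mem' := fun c x hx => by
          simp only [Set.mem_setOf_eq] at *
          rw [← mul_smul, mul_comm, mul_smul, hx, smul_zero] }
    have hKn : Submodule.span R (ℳ n : Set M) ≤ K := by
      rw [Submodule.span_le]
      intro x hx
      exact hr x hx
    exact hKn (hkey n hn m hm)
  -- the stabilization via Noetherianness of R
  have hmon : Monotone (fun k => b (N + k)) := by
    apply monotone_nat_of_le_succ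
    intro k
    exact hbmono (N + k) (Nat.le_add_right N k)
  obtain ⟨k₀, hk₀⟩ := monotone_stabilizes_iff_noetherian.mpr
    (isNoetherianRing_iff.mp ‹IsNoetherianRing R›) ⟨fun k => b (N + k), hmon⟩
  refine ⟨N + k₀, ?_⟩
  have hb_eq : ∀ n, N + k₀ ≤ n → b n = b (N + k₀) := by
    intro n hn
    have h2 : N + (n - N) = n := by omega
    have h3 := hk₀ (n - N) (by omega)
    simp only [OrderHom.coe_mk] at h3
    rw [← h2]
    exact h3.symm
  -- relate annihilators in R₀ to the ideals b n
  have hann : ∀ n, Module.annihilator R₀ (ℳ n) = (b n).comap (algebraMap R₀ R) := by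
    intro n
    ext r₀
    rw [Module.mem_annihilator, Ideal.mem_comap]
    constructor
    · intro h m hm
      rw [algebraMap_smul]
      exact congrArg Subtype.val (h ⟨m, hm⟩)
    · intro h m
      have := h (m : M) m.2
      rw [algebraMap_smul] at this
      exact Subtype.ext this
  intro n hn
  have : Module.annihilator R₀ (ℳ n) = Module.annihilator R₀ (ℳ (N + k₀)) := by
    rw [hann, hann, hb_eq n hn]
  rw [this]
end

section
/- Let S = ⊕_{(a,b) ∈ N²} S_{(a,b)} be a Noetherian bigraded ring with S_{(0,0)} = A a Noetherian ring, and let M = ⊕_{(a,b)} M_{(a,b)} be a finitely generated bigraded S-module. Then the set ⋃_{(a,b) ∈ N²} Ass_A(M_{(a,b)}) of associated primes over A of all bigraded components of M is finite. -/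
/-!
Each component `M_{(a,b)}` is an `A`-submodule of `M`, so its associated primes over `A` are
associated primes of `M` over `A`. Since `S` is Noetherian, `M` has a prime filtration with
factors `S ⧸ P`; such a factor is a domain on which `A` acts through `A → S ⧸ P`, so its only
possible associated prime over `A` is the kernel of that map. Hence `Ass_A(M)` is finite.
-/

theorem associatedPrimes_subset_ker_algebraMap {A D : Type*} [CommRing A] [CommRing D]
    [IsDomain D] [Algebra A D] :
    associatedPrimes A D ⊆ {RingHom.ker (algebraMap A D)} := by
  rintro q ⟨hq, z, rfl⟩
  have hz : z ≠ 0 := by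
    rintro rfl
    exact hq.ne_top (by simp)
  have hcolon : Submodule.colon ⊥ {z} = RingHom.ker (algebraMap A D) := by
    ext c
    simp [Submodule.mem_colon_singleton, Algebra.smul_def, hz]
  rw [hcolon, (RingHom.ker_isPrime _).radical]
  rfl

theorem associatedPrimes_finite_of_isScalarTower {A S M : Type*} [CommRing A] [CommRing S]
    [Algebra A S] [AddCommGroup M] [Module S M] [Module A M] [IsScalarTower A S M]
    [IsNoetherianRing S] [Module.Finite S M] :
    (associatedPrimes A M).Finite := by
  -- The modules met in the induction carry only an `S`-module structure; the `A`-module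
  -- structure is restricted along `algebraMap A S` where needed.
  induction ‹Module.Finite S M› using IsNoetherianRing.induction_on_isQuotientEquivQuotientPrime S
    generalizing ‹Module A M› ‹IsScalarTower A S M› with
  | subsingleton N => simp [associatedPrimes.eq_empty_of_subsingleton]
  | quotient N p e =>
    rw [LinearEquiv.AssociatedPrimes.eq (e.restrictScalars A)]
    exact (Set.finite_singleton _).subset associatedPrimes_subset_ker_algebraMap
  | exact N₁ N₂ N₃ f g hf _ hfg h₁ h₃ =>
    let := Module.compHom N₁ (algebraMap A S)
    let := Module.compHom N₃ (algebraMap A S)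
    have : IsScalarTower A S N₁ := ⟨fun a s n => by rw [Algebra.smul_def, mul_smul]; rfl⟩
    have : IsScalarTower A S N₃ := ⟨fun a s n => by rw [Algebra.smul_def, mul_smul]; rfl⟩
    exact (h₁.union h₃).subset
      (associatedPrimes.subset_union_of_exact (f := f.restrictScalars A)
        (g := g.restrictScalars A) hf hfg)

theorem bigraded_associatedPrimes_finite_general
    {A S M : Type*} [CommRing A] [CommRing S] [Algebra A S]
    [AddCommGroup M] [Module S M] [Module A M] [IsScalarTower A S M]
    (ℳ : ℕ × ℕ → Submodule A M)
    [IsNoetherianRing S] [Module.Finite S M] :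
    (⋃ p : ℕ × ℕ, associatedPrimes A (ℳ p)).Finite :=
  (associatedPrimes_finite_of_isScalarTower (S := S)).subset <| Set.iUnion_subset fun p =>
    associatedPrimes.subset_of_injective (Submodule.injective_subtype (ℳ p))

/-- West's lemma. Let `S` be a Noetherian `ℕ²`-bigraded ring whose
degree-`(0,0)` part is a Noetherian ring `A`, and let `M` be a finitely generated bigraded
`S`-module with components `M_{(a,b)}`.  Then `⋃_{(a,b)} Ass_A(M_{(a,b)})` is finite. -/
theorem bigraded_associatedPrimes_finite
    {A S M : Type*} [CommRing A] [IsNoetherianRing A] [CommRing S] [Algebra A S]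
    [AddCommGroup M] [Module S M] [Module A M] [IsScalarTower A S M]
    (𝒜 : ℕ × ℕ → Submodule A S) (ℳ : ℕ × ℕ → Submodule A M)
    [GradedAlgebra 𝒜] [DirectSum.Decomposition ℳ] [SetLike.GradedSMul 𝒜 ℳ]
    (hzero : 𝒜 0 = (1 : Submodule A S))
    [IsNoetherianRing S] [Module.Finite S M] :
    (⋃ p : ℕ × ℕ, associatedPrimes A (ℳ p)).Finite :=
  bigraded_associatedPrimes_finite_general (S := S) ℳ
end
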